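/- arXiv:1307.2828 — 2 statements merged into one kernel-verified Lean document; each statement's English description precedes it below -/
import Mathlib

section
/- Let s, t be infinite words and h a morphism (of free monoids, possibly erasing) with t = h(s), where h applied letterwise to s produces the infinite word t. If t admits a finite coloring of its non-empty factors with no monochromatic factorization, then so does s; moreover if t admits such a coloring with k colors, then s admits one with k+1 colors (k colors if h is non-erasing). -/
variable {A B : Type}

/-- The finite word `u` occurs in the infinite word `x` at position `k`. -/
def FactorAt (u : List A) (x : ℕ → A) (k : ℕ) : Prop :=
  u = (List.range u.length).map fun i => x (k + i)

/-- `u` is a factor of the infinite word `x`. -/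
def IsFactorOf (u : List A) (x : ℕ → A) : Prop :=
  ∃ k, FactorAt u x k

/-- `u` is a prefix of the infinite word `x`. -/
def IsPrefixOf (u : List A) (x : ℕ → A) : Prop :=
  FactorAt u x 0

/-- Starting position of the `n`-th block in the factorization `U`. -/
def facPos (U : ℕ → List A) : ℕ → ℕ
  | 0 => 0
  | n + 1 => facPos U n + (U n).length

/-- `x = U 0 ++ U 1 ++ U 2 ++ ⋯` with all blocks non-empty. -/
def IsFactorizationOf (U : ℕ → List A) (x : ℕ → A) : Prop :=
  (∀ n, U n ≠ []) ∧ ∀ n, FactorAt (U n) x (facPos U n)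

/-- A factorization of `x` into non-empty prefixes of `x`. -/
def IsPrefixalFactorizationOf (U : ℕ → List A) (x : ℕ → A) : Prop :=
  IsFactorizationOf U x ∧ ∀ n, IsPrefixOf (U n) x

/-- `x` admits a finite coloring of its factors with no monochromatic factorization. -/
def InP (x : ℕ → A) : Prop :=
  ∃ (C : Type) (_ : Fintype C) (c : List A → C),
    ∀ U : ℕ → List A, IsFactorizationOf U x → ∃ i j, c (U i) ≠ c (U j)

/-- `x` admits a coloring with exactly `k` colors and no monochromatic factorization. -/
def InPk (k : ℕ) (x : ℕ → A) : Prop :=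
  ∃ (C : Type) (_ : Fintype C), Fintype.card C = k ∧
    ∃ c : List A → C,
      ∀ U : ℕ → List A, IsFactorizationOf U x → ∃ i j, c (U i) ≠ c (U j)

/-- Position in `h(s)` where the image of the `n`-th letter of `s` begins. -/
def morphPos (h : A → List B) (s : ℕ → A) : ℕ → ℕ
  | 0 => 0
  | n + 1 => morphPos h s n + (h (s n)).length

/-- image of a finite word under the morphism -/
def hword (h : A → List B) (u : List A) : List B := (u.map h).flatten

lemma factorAt_iff {u : List A} {x : ℕ → A} {k : ℕ} :
    FactorAt u x k ↔ ∀ i (hi : i < u.length), u[i] = x (k + i) := by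
  constructor
  · intro hf i hi
    rw [List.getElem_of_eq hf hi]
    simp
  · intro hg
    apply List.ext_getElem (by simp)
    intro i h1 h2
    simpa using hg i h1

lemma factorAt_nil {x : ℕ → A} {k : ℕ} : FactorAt ([] : List A) x k := by
  simp [FactorAt]

lemma factorAt_cons {a : A} {u : List A} {x : ℕ → A} {k : ℕ} :
    FactorAt (a :: u) x k ↔ a = x k ∧ FactorAt u x (k + 1) := by
  simp only [factorAt_iff]
  constructor
  · intro hf
    refine ⟨by have h0 := hf 0 (by simp); exact h0, fun i hi => ?_⟩
    have := hf (i + 1) (by simpa using hi)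
    simpa [Nat.add_comm, Nat.add_assoc, Nat.add_left_comm] using this
  · rintro ⟨ha, hu⟩ i hi
    cases i with
    | zero => simpa using ha
    | succ j =>
      have := hu j (by simpa using hi)
      simpa [Nat.add_comm, Nat.add_assoc, Nat.add_left_comm] using this

lemma factorAt_append {u v : List A} {x : ℕ → A} {k : ℕ}
    (hu : FactorAt u x k) (hv : FactorAt v x (k + u.length)) :
    FactorAt (u ++ v) x k := by
  rw [factorAt_iff] at *
  intro i hi
  rcases lt_or_ge i u.length with h | h
  · rw [List.getElem_append_left h]; exact hu i h
  · rw [List.getElem_append_right h]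
    have := hv (i - u.length) (by simp at hi; omega)
    rw [this]; congr 1; omega

lemma morphPos_mono (h : A → List B) (s : ℕ → A) : Monotone (morphPos h s) :=
  monotone_nat_of_le_succ fun n => by simp [morphPos]

/-- key lemma -/
lemma key (h : A → List B) (s : ℕ → A) (t : ℕ → B)
    (himg : ∀ n, FactorAt (h (s n)) t (morphPos h s n)) :
    ∀ (u : List A) (m : ℕ), FactorAt u s m →
      morphPos h s (m + u.length) = morphPos h s m + (hword h u).length ∧
      FactorAt (hword h u) t (morphPos h s m) := by
  intro u
  induction u with
  | nil => intro m _; simp [hword, factorAt_nil]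
  | cons a v ih =>
    intro m hf
    rw [factorAt_cons] at hf
    obtain ⟨ha, hv⟩ := hf
    obtain ⟨ih1, ih2⟩ := ih (m + 1) hv
    have hm1 : morphPos h s (m + 1) = morphPos h s m + (h a).length := by
      simp [morphPos, ha]
    have hword_cons : hword h (a :: v) = h a ++ hword h v := by
      simp [hword]
    constructor
    · have : m + (a :: v).length = (m + 1) + v.length := by simp; omega
      rw [this, ih1, hm1, hword_cons]
      simp [Nat.add_assoc]
    · rw [hword_cons]
      apply factorAt_append
      · have := himg m; rwa [← ha] at this
      · rw [← hm1]; exact ih2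

lemma facPos_ge (U : ℕ → List A) (hU : ∀ n, U n ≠ []) : ∀ n, n ≤ facPos U n := by
  intro n
  induction n with
  | zero => simp [facPos]
  | succ k ih =>
    have : 1 ≤ (U k).length := List.length_pos_iff.mpr (hU k)
    simp only [facPos]; omega

/-- Main combination lemma: from a good coloring of t, any factorization of s
has two blocks whose images differ in color, or one image empty one not. -/
lemma main_lemma (h : A → List B) (s : ℕ → A) (t : ℕ → B)
    (himg : ∀ n, FactorAt (h (s n)) t (morphPos h s n))
    (hinf : ∀ N : ℕ, ∃ n, N ≤ morphPos h s n)
    {C : Type} (c : List B → C)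
    (hc : ∀ V : ℕ → List B, IsFactorizationOf V t → ∃ i j, c (V i) ≠ c (V j))
    (U : ℕ → List A) (hU : IsFactorizationOf U s) :
    (∃ i j, hword h (U i) = [] ∧ hword h (U j) ≠ []) ∨
    ((∀ n, hword h (U n) ≠ []) ∧ ∃ i j, c (hword h (U i)) ≠ c (hword h (U j))) := by
  obtain ⟨hUne, hUfac⟩ := hU
  set V : ℕ → List B := fun n => hword h (U n) with hV
  set P : ℕ → ℕ := fun n => morphPos h s (facPos U n) with hPdef
  have hkey : ∀ n, P (n + 1) = P n + (V n).length ∧ FactorAt (V n) t (P n) := by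
    intro n
    obtain ⟨k1, k2⟩ := key h s t himg (U n) (facPos U n) (hUfac n)
    exact ⟨k1, k2⟩
  -- some block has nonempty image
  have hPunb : ∀ N, ∃ n, N ≤ P n := by
    intro N
    obtain ⟨m, hm⟩ := hinf N
    exact ⟨m, le_trans hm (morphPos_mono h s (facPos_ge U hUne m))⟩
  have hex : ∃ m, V m ≠ [] := by
    by_contra hcon
    push_neg at hcon
    have hP0 : ∀ n, P n = 0 := by
      intro n
      induction n with
      | zero => simp [hPdef, facPos, morphPos]
      | succ k ih => rw [(hkey k).1, ih, hcon k]; simp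
    obtain ⟨n, hn⟩ := hPunb 1
    rw [hP0 n] at hn; omega
  by_cases hall : ∀ n, V n ≠ []
  · right
    refine ⟨hall, ?_⟩
    have hfacPV : ∀ n, facPos V n = P n := by
      intro n
      induction n with
      | zero => simp [facPos, hPdef, morphPos]
      | succ k ih => rw [facPos, ih, (hkey k).1]
    have : IsFactorizationOf V t := by
      refine ⟨hall, fun n => ?_⟩
      rw [hfacPV]; exact (hkey n).2
    exact hc V this
  · left
    push_neg at hall
    obtain ⟨n, hn⟩ := hall
    obtain ⟨m, hm⟩ := hex
    exact ⟨n, m, hn, hm⟩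

open Classical in
/-- induced coloring on factors of s -/
noncomputable def cImg {C : Type} (h : A → List B) (c : List B → C) (u : List A) : Option C :=
  if hword h u = [] then none else some (c (hword h u))

lemma hword_ne_nil {h : A → List B} (hne : ∀ a, h a ≠ []) {u : List A} (hu : u ≠ []) :
    hword h u ≠ [] := by
  cases u with
  | nil => exact absurd rfl hu
  | cons a r => simp [hword, hne a]

theorem morphic_preimage_in_P
    (h : A → List B) (s : ℕ → A) (t : ℕ → B)
    (himg : ∀ n, FactorAt (h (s n)) t (morphPos h s n))
    (hinf : ∀ N : ℕ, ∃ n, N ≤ morphPos h s n) :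
    (InP t → InP s) ∧
    (∀ k, InPk k t → InPk (k + 1) s) ∧
    ((∀ a, h a ≠ []) → ∀ k, InPk k t → InPk k s) := by
  have mainE : ∀ {C : Type} (c : List B → C),
      (∀ V : ℕ → List B, IsFactorizationOf V t → ∃ i j, c (V i) ≠ c (V j)) →
      ∀ U : ℕ → List A, IsFactorizationOf U s →
        ∃ i j, cImg h c (U i) ≠ cImg h c (U j) := by
    intro C c hc U hU
    rcases main_lemma h s t himg hinf c hc U hU with ⟨i, j, hi, hj⟩ | ⟨hall, i, j, hij⟩
    · exact ⟨i, j, by simp [cImg, hi, hj]⟩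
    · exact ⟨i, j, by simp [cImg, hall i, hall j, hij]⟩
  refine ⟨?_, ?_, ?_⟩
  · rintro ⟨C, instC, c, hc⟩
    exact ⟨Option C, inferInstance, cImg h c, mainE c hc⟩
  · rintro k ⟨C, instC, hcard, c, hc⟩
    exact ⟨Option C, inferInstance, by simp [Fintype.card_option, hcard], cImg h c, mainE c hc⟩
  · rintro hne k ⟨C, instC, hcard, c, hc⟩
    refine ⟨C, instC, hcard, fun u => c (hword h u), ?_⟩
    intro U hU
    rcases main_lemma h s t himg hinf c hc U hU with ⟨i, j, hi, _⟩ | ⟨_, i, j, hij⟩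
    · exact absurd hi (hword_ne_nil hne (hU.1 i))
    · exact ⟨i, j, hij⟩
end

section
/- Let w be a non-empty right special factor of a Sturmian word s. Then w is rich in its first letter, i.e., writing w = z w' with z ∈ {a,b}, there exists a factor v of s with |v| = |w| and |w|_z > |v|_z. Dually, a non-empty left special factor of s is rich in its last letter. -/
variable {A B : Type}

/-- `s` is not ultimately periodic. -/
def Aperiodic (s : ℕ → Bool) : Prop :=
  ¬ ∃ (N p : ℕ), 0 < p ∧ ∀ n, N ≤ n → s (n + p) = s n

/-- `s` is balanced: counts of each letter in equal-length factors differ by at most 1. -/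
def IsBalanced (s : ℕ → Bool) : Prop :=
  ∀ u v : List Bool, IsFactorOf u s → IsFactorOf v s → u.length = v.length →
    ∀ z : Bool, ((u.count z : ℤ) - (v.count z : ℤ)).natAbs ≤ 1

lemma factorAt_get {u : List A} {x : ℕ → A} {k : ℕ} (h : FactorAt u x k)
    (i : ℕ) (hi : i < u.length) : u.get ⟨i, hi⟩ = x (k + i) := by
  have h' := congrArg (fun l => l[i]?) h
  simp only [List.getElem?_eq_getElem hi] at h'
  simp only [List.getElem?_map, List.getElem?_range] at h'
  rw [List.getElem?_eq_getElem (by simpa using hi)] at h'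
  simp only [List.getElem_range, Option.map_some] at h'
  simpa using h'

lemma factorAt_of_forall {u : List A} {x : ℕ → A} {k : ℕ}
    (h : ∀ i (hi : i < u.length), u.get ⟨i, hi⟩ = x (k + i)) : FactorAt u x k := by
  apply List.ext_get (by simp)
  intro i h1 h2
  simpa using h i h1

lemma isFactorOf_of_infix {u v : List A} {x : ℕ → A} (h : u <:+: v)
    (hv : IsFactorOf v x) : IsFactorOf u x := by
  obtain ⟨p, q, rfl⟩ := h
  obtain ⟨k, hk⟩ := hv
  refine ⟨k + p.length, factorAt_of_forall fun i hi => ?_⟩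
  have h2 : p.length + i < (p ++ u ++ q).length := by simp; omega
  have key := factorAt_get hk (p.length + i) h2
  rw [Nat.add_assoc, ← key]
  simp only [List.get_eq_getElem]
  rw [List.getElem_append, dif_pos (by simp; omega),
    List.getElem_append_right (by omega)]
  simp

theorem special_factors_rich
    (s : ℕ → Bool) (hap : Aperiodic s) (hbal : IsBalanced s) :
    (∀ (w : List Bool) (hw : w ≠ []),
      IsFactorOf (w ++ [true]) s → IsFactorOf (w ++ [false]) s →
      ∃ v : List Bool, IsFactorOf v s ∧ v.length = w.length ∧
        v.count (w.head hw) < w.count (w.head hw)) ∧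
    (∀ (w : List Bool) (hw : w ≠ []),
      IsFactorOf (true :: w) s → IsFactorOf (false :: w) s →
      ∃ v : List Bool, IsFactorOf v s ∧ v.length = w.length ∧
        v.count (w.getLast hw) < w.count (w.getLast hw)) := by
  constructor
  · intro w hw hT hF
    set z := w.head hw with hz
    have hwz : w = z :: w.tail := (List.cons_head_tail hw).symm
    have hfac : IsFactorOf (w ++ [!z]) s := by cases hb : z <;> simp [hb] <;> assumption
    have hpos := List.length_pos_iff.mpr hw
    refine ⟨w.tail ++ [!z], isFactorOf_of_infix ?_ hfac, by simp; omega, ?_⟩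
    · refine List.IsSuffix.isInfix ⟨[z], ?_⟩
      conv_rhs => rw [hwz]
      simp
    · conv_rhs => rw [hwz]
      simp [List.count_append, List.count_cons]
  · intro w hw hT hF
    set z := w.getLast hw with hz
    have hwz : w = w.dropLast ++ [z] := (List.dropLast_append_getLast hw).symm
    have hfac : IsFactorOf ((!z) :: w) s := by cases hb : z <;> simp [hb] <;> assumption
    have hpos := List.length_pos_iff.mpr hw
    refine ⟨(!z) :: w.dropLast, isFactorOf_of_infix ?_ hfac, by simp; omega, ?_⟩
    · refine List.IsPrefix.isInfix ⟨[z], ?_⟩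
      conv_rhs => rw [hwz]
      simp
    · conv_rhs => rw [hwz]
      simp [List.count_append, List.count_cons]
end
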